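/- arXiv:1809.07714 — 5 statements merged into one kernel-verified Lean document; each statement's English description precedes it below -/
import Mathlib

section
/- Let p be prime, l ≥ 0 an integer, and f : Z_p → Q_p a continuous function with wavelet expansion f = ∑_k a_k χ_k. If v_p(f(0)) ≥ Δ(f) + l, then Δ(f ∘ [p^l]) ≥ Δ(f) + l, where [p^l] : Z_p → Z_p denotes multiplication by p^l. -/
open scoped Classical

/-- `l(k)`: `l(0) = 0` and `l(k) = ⌊log_p k⌋ + 1` for `k > 0`. -/
def waveletLevel (p k : ℕ) : ℕ := if k = 0 then 0 else Nat.log p k + 1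

/-- `k₋`: the natural number obtained from `k` by deleting the top digit of its
`p`-adic expansion, i.e. `k % p^(l(k)-1)`. -/
def waveletPred (p k : ℕ) : ℕ := k % p ^ (waveletLevel p k - 1)

/-- The wavelet coefficients of a function `f : ℤ_p → ℚ_p`:
`a_0 = f(0)` and `a_k = f(k) - f(k₋)` for `k > 0`. -/
noncomputable def waveletCoeff (p : ℕ) [Fact p.Prime] (f : ℤ_[p] → ℚ_[p]) (k : ℕ) : ℚ_[p] :=
  if k = 0 then f 0 else f (k : ℤ_[p]) - f ((waveletPred p k : ℕ) : ℤ_[p])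

/-- The extended `p`-adic valuation, with `v_p(0) = ⊤`. -/
noncomputable def valE (p : ℕ) [Fact p.Prime] (x : ℚ_[p]) : EReal :=
  if x = 0 then ⊤ else ((x.valuation : ℝ) : EReal)

/-- `Δ(f) = inf_k (v_p(a_k) - l(k))`, where `f = ∑_k a_k χ_k` is the wavelet expansion. -/
noncomputable def waveletDelta (p : ℕ) [Fact p.Prime] (f : ℤ_[p] → ℚ_[p]) : EReal :=
  ⨅ k : ℕ, (valE p (waveletCoeff p f k) - ((waveletLevel p k : ℝ) : EReal))

/-!
Multiplication by `p^l` shifts the `p`-adic digits of `k` by `l` places, so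
`l(p^l k) = l + l(k)` and `(p^l k)₋ = p^l k₋`. Hence the coefficient of `f ∘ [p^l]` at `k > 0`
is the coefficient of `f` at `p^l k`, and its term `v_p(a_{p^l k}) - l(k)` exceeds the term
`v_p(a_{p^l k}) - l(p^l k) ≥ Δ(f)` of `f` by exactly `l`. The term `k = 0` is `v_p(f(0))`,
which is controlled by the hypothesis.
-/

lemma Nat.log_pow_mul {b : ℕ} (hb : 1 < b) (l : ℕ) {k : ℕ} (hk : k ≠ 0) :
    Nat.log b (b ^ l * k) = l + Nat.log b k := by
  induction l with
  | zero => simp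
  | succ n ih =>
    rw [pow_succ, mul_right_comm, Nat.log_mul_base hb (by positivity), ih]
    omega

lemma waveletLevel_pow_mul {p : ℕ} (hp : 1 < p) (l : ℕ) {k : ℕ} (hk : k ≠ 0) :
    waveletLevel p (p ^ l * k) = l + waveletLevel p k := by
  have hpk : p ^ l * k ≠ 0 := by positivity
  simp only [waveletLevel, hpk, hk, if_false, Nat.log_pow_mul hp l hk]
  omega

lemma waveletPred_pow_mul {p : ℕ} (hp : 1 < p) (l : ℕ) {k : ℕ} (hk : k ≠ 0) :
    waveletPred p (p ^ l * k) = p ^ l * waveletPred p k := by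
  have hlevel : 1 ≤ waveletLevel p k := by simp [waveletLevel, hk]
  rw [waveletPred, waveletPred, waveletLevel_pow_mul hp l hk,
    Nat.add_sub_assoc hlevel, pow_add, Nat.mul_mod_mul_left]

lemma waveletCoeff_comp_pow_mul (p : ℕ) [Fact p.Prime] (l : ℕ) (f : ℤ_[p] → ℚ_[p]) {k : ℕ}
    (hk : k ≠ 0) :
    waveletCoeff p (fun x => f ((p : ℤ_[p]) ^ l * x)) k = waveletCoeff p f (p ^ l * k) := by
  have hp : 1 < p := (Fact.out : p.Prime).one_lt
  have hpk : p ^ l * k ≠ 0 := by positivity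
  simp only [waveletCoeff, hk, hpk, if_false, waveletPred_pow_mul hp l hk, Nat.cast_mul,
    Nat.cast_pow]

lemma EReal.sub_coe_add_add_cancel (a : EReal) (s t : ℝ) :
    a - ((s + t : ℝ) : EReal) + s = a - t := by
  induction a <;> simp [← EReal.coe_sub, ← EReal.coe_add]
  ring

theorem waveletDelta_comp_pPow_general (p : ℕ) [Fact p.Prime] (l : ℕ) (f : ℤ_[p] → ℚ_[p])
    (h0 : waveletDelta p f + ((l : ℝ) : EReal) ≤ valE p (f 0)) :
    waveletDelta p f + ((l : ℝ) : EReal) ≤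
      waveletDelta p (fun x => f ((p : ℤ_[p]) ^ l * x)) := by
  have hp : 1 < p := (Fact.out : p.Prime).one_lt
  refine le_iInf fun k => ?_
  rcases eq_or_ne k 0 with rfl | hk
  · simpa [waveletCoeff, waveletLevel] using h0
  rw [waveletCoeff_comp_pow_mul p l f hk]
  calc waveletDelta p f + ((l : ℝ) : EReal)
      ≤ valE p (waveletCoeff p f (p ^ l * k)) - ((waveletLevel p (p ^ l * k) : ℝ) : EReal)
          + ((l : ℝ) : EReal) :=
        add_le_add_left (iInf_le _ (p ^ l * k)) _
    _ = valE p (waveletCoeff p f (p ^ l * k)) - ((waveletLevel p k : ℝ) : EReal) := by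
        rw [waveletLevel_pow_mul hp l hk, Nat.cast_add]
        exact EReal.sub_coe_add_add_cancel _ _ _

/-- If `v_p(f(0)) ≥ Δ(f) + l`, then `Δ(f ∘ [p^l]) ≥ Δ(f) + l`, where `[p^l]`
denotes multiplication by `p^l` on `ℤ_p`. -/
theorem waveletDelta_comp_pPow (p : ℕ) [Fact p.Prime] (l : ℕ) (f : ℤ_[p] → ℚ_[p])
    (hf : Continuous f)
    (h0 : waveletDelta p f + ((l : ℝ) : EReal) ≤ valE p (f 0)) :
    waveletDelta p f + ((l : ℝ) : EReal) ≤
      waveletDelta p (fun x => f ((p : ℤ_[p]) ^ l * x)) :=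
  waveletDelta_comp_pPow_general p l f h0
end

section
/- Let s > 1 be an integer and x ∈ Q_p with |x|_p ≥ q_p (where q_p = p for odd p and q_2 = 4). Then ω(x)^{1−s}·ζ_p(s,x) = (1/(s−1))·lim_{r→∞} p^{−r} ∑_{0≤m<p^r} (x+m)^{1−s}, i.e., ω(x)^{1−s}ζ_p(s,x) equals 1/(s−1) times the Volkenborn integral of t ↦ (x+t)^{1−s}. -/
/-!
Since `|m|_p ≤ 1 < q_p ≤ |x|_p`, the ratio `(x + m) / x` lies in `1 + q_p ℤ_p`. Hence `x + m` and
`x` have the same valuation, and `ω(x + m) / ω(x)` is a `φ(q_p)`-th root of unity congruent to `1`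
modulo `q_p`. As `|φ(q_p)|_p > 1 / q_p`, such a root of unity is `1`, so `ω(x + m) = ω(x)`. The
Riemann sums of `⟨x + t⟩^{1-s}` are therefore those of `(x + t)^{1-s}` divided by `ω(x)^{1-s}`.
-/

open Filter IsUltrametricDist

section Ultrametric

variable {K : Type*} [NormedField K] [IsUltrametricDist K]

lemma norm_eq_one_of_norm_sub_one_lt_one {a : K} (ha : ‖a - 1‖ < 1) : ‖a‖ = 1 := by
  have h := norm_add_eq_max_of_norm_ne_norm (x := a - 1) (y := 1) (by rw [norm_one]; exact ha.ne)
  rwa [sub_add_cancel, norm_one, max_eq_right ha.le] at h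

lemma norm_mul_sub_one_le {a b : K} {c : ℝ} (ha : ‖a - 1‖ ≤ c) (hb : ‖b - 1‖ ≤ c) (hc : c < 1) :
    ‖a * b - 1‖ ≤ c := by
  have hb1 : ‖b‖ = 1 := norm_eq_one_of_norm_sub_one_lt_one (hb.trans_lt hc)
  calc ‖a * b - 1‖ = ‖(a - 1) * b + (b - 1)‖ := by ring_nf
    _ ≤ max ‖(a - 1) * b‖ ‖b - 1‖ := norm_add_le_max _ _
    _ ≤ c := by rw [norm_mul, hb1, mul_one]; exact max_le ha hb

lemma norm_inv_sub_one_le {a : K} {c : ℝ} (ha : ‖a - 1‖ ≤ c) (hc : c < 1) : ‖a⁻¹ - 1‖ ≤ c := by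
  have ha1 : ‖a‖ = 1 := norm_eq_one_of_norm_sub_one_lt_one (ha.trans_lt hc)
  have ha0 : a ≠ 0 := norm_ne_zero_iff.mp (by rw [ha1]; exact one_ne_zero)
  calc ‖a⁻¹ - 1‖ = ‖(1 - a) * a⁻¹‖ := by rw [sub_mul, one_mul, mul_inv_cancel₀ ha0]
    _ ≤ c := by rw [norm_mul, norm_inv, ha1, inv_one, mul_one, norm_sub_rev]; exact ha

lemma norm_pow_sub_one_le {ζ : K} (hζ : ‖ζ‖ ≤ 1) (n : ℕ) : ‖ζ ^ n - 1‖ ≤ ‖ζ - 1‖ := by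
  rw [← geom_sum_mul, norm_mul]
  refine mul_le_of_le_one_left (norm_nonneg _)
    (norm_sum_le_of_forall_le_of_nonneg zero_le_one fun k _ => ?_)
  rw [norm_pow]
  exact pow_le_one₀ (norm_nonneg _) hζ

lemma eq_one_of_pow_eq_one_of_norm_sub_one_lt {ζ : K} {n : ℕ} (hζn : ζ ^ n = 1)
    (h : ‖ζ - 1‖ < ‖(n : K)‖) : ζ = 1 := by
  have hζ : ‖ζ‖ ≤ 1 :=
    (norm_eq_one_of_norm_sub_one_lt_one (h.trans_le (norm_natCast_le_one K n))).le
  -- `∑ ζ^k ≡ n` modulo `|ζ - 1|`, so the geometric sum does not vanish.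
  have hsum : ‖(∑ k ∈ Finset.range n, ζ ^ k) - n‖ < ‖(n : K)‖ := by
    have he : (∑ k ∈ Finset.range n, ζ ^ k) - n = ∑ k ∈ Finset.range n, (ζ ^ k - 1) := by
      simp [Finset.sum_sub_distrib]
    rw [he]
    exact (norm_sum_le_of_forall_le_of_nonneg (norm_nonneg _)
      fun k _ => norm_pow_sub_one_le hζ k).trans_lt h
  have hne : ∑ k ∈ Finset.range n, ζ ^ k ≠ 0 := by
    intro h0
    rw [h0, zero_sub, norm_neg] at hsum
    exact lt_irrefl _ hsum
  have hgeom := geom_sum_mul ζ n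
  rw [hζn, sub_self] at hgeom
  exact sub_eq_zero.mp ((mul_eq_zero.mp hgeom).resolve_left hne)

end Ultrametric

namespace Padic

variable {p : ℕ} [Fact p.Prime]

lemma valuation_eq_of_norm_div_sub_one_lt_one {y y' : ℚ_[p]} (hy : y ≠ 0) (hy' : y' ≠ 0)
    (h : ‖y' / y - 1‖ < 1) : y'.valuation = y.valuation := by
  have hnorm : ‖y'‖ = ‖y‖ := by
    have := norm_eq_one_of_norm_sub_one_lt_one h
    rwa [norm_div, div_eq_one_iff_eq (norm_ne_zero_iff.mpr hy)] at this
  rw [norm_eq_zpow_neg_valuation hy, norm_eq_zpow_neg_valuation hy'] at hnorm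
  have hp : (1 : ℝ) < p := mod_cast (Fact.out : p.Prime).one_lt
  exact neg_inj.mp (zpow_right_injective₀ (zero_lt_one.trans hp) hp.ne' hnorm)

/-- The extended Teichmüller character has this property for `N = φ(q_p)` and `c = 1 / q_p`;
`y / ω y` is `⟨y⟩`. -/
def IsTeichmullerCharacter (N : ℕ) (c : ℝ) (ω : ℚ_[p] → ℚ_[p]) : Prop :=
  ∀ y : ℚ_[p], y ≠ 0 →
    (∃ ζ : ℚ_[p], ζ ^ N = 1 ∧ ω y = (p : ℚ_[p]) ^ y.valuation * ζ) ∧ ‖y / ω y - 1‖ ≤ c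

namespace IsTeichmullerCharacter

variable {N : ℕ} {c : ℝ} {ω : ℚ_[p] → ℚ_[p]}

lemma map_ne_zero (hω : IsTeichmullerCharacter N c ω) (hc : c < 1) {y : ℚ_[p]} (hy : y ≠ 0) :
    ω y ≠ 0 := by
  intro h0
  have h := (hω y hy).2
  rw [h0, div_zero, zero_sub, norm_neg, norm_one] at h
  exact (h.trans_lt hc).false

lemma map_eq_of_norm_div_sub_one_le (hω : IsTeichmullerCharacter N c ω)
    (hc : c < ‖(N : ℚ_[p])‖) {y y' : ℚ_[p]} (hy : y ≠ 0) (hy' : y' ≠ 0)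
    (h : ‖y' / y - 1‖ ≤ c) : ω y' = ω y := by
  have hc1 : c < 1 := hc.trans_le (norm_natCast_le_one ℚ_[p] N)
  obtain ⟨⟨ζ, hζ, hωy⟩, hu⟩ := hω y hy
  obtain ⟨⟨ζ', hζ', hωy'⟩, hu'⟩ := hω y' hy'
  have hωy0 := hω.map_ne_zero hc1 hy
  have hval := valuation_eq_of_norm_div_sub_one_lt_one hy hy' (h.trans_lt hc1)
  have hratio : ω y' / ω y = ζ' / ζ := by
    have hp0 : (p : ℚ_[p]) ≠ 0 := mod_cast (Fact.out : p.Prime).ne_zero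
    rw [hωy, hωy', hval, mul_div_mul_left _ _ (zpow_ne_zero _ hp0)]
  have hnear : ‖ω y' / ω y - 1‖ ≤ c := by
    have he : ω y' / ω y = y' / y * (y / ω y) * (y' / ω y')⁻¹ := by
      field_simp [hω.map_ne_zero hc1 hy']
    rw [he]
    exact norm_mul_sub_one_le (norm_mul_sub_one_le h hu hc1) (norm_inv_sub_one_le hu' hc1) hc1
  have hroot : (ω y' / ω y) ^ N = 1 := by rw [hratio, div_pow, hζ, hζ', div_one]
  exact div_eq_one_iff_eq hωy0 |>.mp
    (eq_one_of_pow_eq_one_of_norm_sub_one_lt hroot (hnear.trans_lt hc))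

lemma map_add_eq (hω : IsTeichmullerCharacter N c ω) (hc : c < ‖(N : ℚ_[p])‖) {x z : ℚ_[p]}
    (hx : x ≠ 0) (hz : ‖z‖ ≤ c * ‖x‖) : ω (x + z) = ω x := by
  have hc1 : c < 1 := hc.trans_le (norm_natCast_le_one ℚ_[p] N)
  have hx0 : 0 < ‖x‖ := norm_pos_iff.mpr hx
  have hzx : ‖z / x‖ ≤ c := by rwa [norm_div, div_le_iff₀ hx0]
  have hxz : x + z ≠ 0 := by
    intro h0
    rw [eq_neg_of_add_eq_zero_right h0, norm_neg] at hz
    nlinarith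
  refine hω.map_eq_of_norm_div_sub_one_le hc hx hxz ?_
  rwa [add_div, div_self hx, add_sub_cancel_left]

end IsTeichmullerCharacter

lemma inv_lt_norm_totient {q : ℕ} (hq : q = if p = 2 then 4 else p) :
    (q : ℝ)⁻¹ < ‖(q.totient : ℚ_[p])‖ := by
  have hp : p.Prime := Fact.out
  by_cases hp2 : p = 2
  · subst hp2
    simp only [if_true] at hq
    subst hq
    rw [show Nat.totient 4 = 2 by decide, Padic.norm_p]
    norm_num
  · simp only [hp2, if_false] at hq
    rw [hq]
    have hcop : Nat.Coprime p (p - 1) :=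
      (Nat.Prime.coprime_iff_not_dvd hp).mpr
        (Nat.not_dvd_of_pos_of_lt (Nat.sub_pos_of_lt hp.one_lt) (Nat.sub_lt hp.pos one_pos))
    rw [Nat.totient_prime hp, Padic.norm_natCast_eq_one_iff.mpr hcop]
    exact inv_lt_one_of_one_lt₀ (mod_cast hp.one_lt)

end Padic

open Padic in
theorem padicHurwitz_volkenborn_general (p : ℕ) [Fact p.Prime]
    (qp : ℕ) (hqp : qp = if p = 2 then 4 else p)
    (s : ℕ)
    (x : ℚ_[p]) (hx : (qp : ℝ) ≤ ‖x‖)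
    (ω : ℚ_[p] → ℚ_[p])
    (hω : ∀ y : ℚ_[p], y ≠ 0 →
      (∃ ζ : ℚ_[p], ζ ^ Nat.totient qp = 1 ∧
        ω y = (p : ℚ_[p]) ^ (y.valuation) * ζ) ∧ ‖y / ω y - 1‖ ≤ ((qp : ℝ))⁻¹)
    (Z : ℚ_[p])
    (hZ : Tendsto
      (fun r : ℕ => ((p : ℚ_[p]) ^ r)⁻¹ *
        ∑ m ∈ Finset.range (p ^ r), ((x + (m : ℚ_[p])) / ω (x + (m : ℚ_[p]))) ^ ((1 : ℤ) - s))
      atTop (nhds (((s : ℚ_[p]) - 1) * Z))) :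
    Tendsto
      (fun r : ℕ => ((p : ℚ_[p]) ^ r)⁻¹ *
        ∑ m ∈ Finset.range (p ^ r), (x + (m : ℚ_[p])) ^ ((1 : ℤ) - s))
      atTop (nhds (((s : ℚ_[p]) - 1) * ((ω x) ^ ((1 : ℤ) - s) * Z))) := by
  replace hω : IsTeichmullerCharacter qp.totient (qp : ℝ)⁻¹ ω := hω
  have hc := inv_lt_norm_totient hqp
  have hq1 : (1 : ℝ) < qp := by rw [hqp]; split_ifs <;> norm_num [(Fact.out : p.Prime).one_lt]
  have hx0 : x ≠ 0 := norm_pos_iff.mp (by linarith)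
  have hωx : ω x ^ ((1 : ℤ) - s) ≠ 0 :=
    zpow_ne_zero _ (hω.map_ne_zero (inv_lt_one_of_one_lt₀ hq1) hx0)
  have hshift (m : ℕ) : ω (x + m) = ω x := hω.map_add_eq hc hx0 <| by
    calc ‖(m : ℚ_[p])‖ ≤ 1 := norm_natCast_le_one ℚ_[p] m
      _ ≤ (qp : ℝ)⁻¹ * ‖x‖ := by rw [inv_mul_eq_div, one_le_div₀ (by linarith)]; exact hx
  rw [mul_left_comm]
  refine (hZ.const_mul (ω x ^ ((1 : ℤ) - s))).congr fun r => ?_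
  simp only [hshift, div_zpow, ← Finset.sum_div]
  field_simp

/-- For an integer `s > 1` and `x ∈ ℚ_p` with `|x|_p ≥ q_p` (where `q_p = p` for odd
`p` and `q_2 = 4`), one has
`ω(x)^{1-s} ζ_p(s,x) = (1/(s-1)) · lim_r p^{-r} ∑_{0 ≤ m < p^r} (x+m)^{1-s}`.
Here `ω` is the extended Teichmüller character, characterized by: for `y ≠ 0`,
`ω(y) = p^{v_p(y)} ζ` with `ζ^{φ(q_p)} = 1`, and `⟨y⟩ = y/ω(y) ∈ 1 + q_p ℤ_p`;
and `ζ_p(s,x)` is the `p`-adic Hurwitz zeta value, defined by the Volkenborn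
integral `ζ_p(s,x) = (1/(s-1)) ∫_{ℤ_p} ⟨x+t⟩^{1-s} dt`. -/
theorem padicHurwitz_volkenborn (p : ℕ) [Fact p.Prime]
    (qp : ℕ) (hqp : qp = if p = 2 then 4 else p)
    (s : ℕ) (hs : 1 < s)
    (x : ℚ_[p]) (hx : (qp : ℝ) ≤ ‖x‖)
    (ω : ℚ_[p] → ℚ_[p])
    (hω : ∀ y : ℚ_[p], y ≠ 0 →
      (∃ ζ : ℚ_[p], ζ ^ Nat.totient qp = 1 ∧
        ω y = (p : ℚ_[p]) ^ (y.valuation) * ζ) ∧ ‖y / ω y - 1‖ ≤ ((qp : ℝ))⁻¹)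
    (Z : ℚ_[p])
    (hZ : Tendsto
      (fun r : ℕ => ((p : ℚ_[p]) ^ r)⁻¹ *
        ∑ m ∈ Finset.range (p ^ r), ((x + (m : ℚ_[p])) / ω (x + (m : ℚ_[p]))) ^ ((1 : ℤ) - s))
      atTop (nhds (((s : ℚ_[p]) - 1) * Z))) :
    Tendsto
      (fun r : ℕ => ((p : ℚ_[p]) ^ r)⁻¹ *
        ∑ m ∈ Finset.range (p ^ r), (x + (m : ℚ_[p])) ^ ((1 : ℤ) - s))
      atTop (nhds (((s : ℚ_[p]) - 1) * ((ω x) ^ ((1 : ℤ) - s) * Z))) :=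
  padicHurwitz_volkenborn_general p qp hqp s x hx ω hω Z hZ
end

section
/- Let λ, n, m be nonnegative integers with λ ≤ n, and let d_n = lcm(1, ..., n). Then the polynomial d_n^λ · (∂/∂t)^λ [ binom(m; n,n,...,n) · C(t, m) ] ∈ Q[t] is integer-valued, where binom(m; n,...,n) is the multinomial coefficient with ⌊m/n⌋ copies of n, and C(t, m) = t(t−1)⋯(t−m+1)/m! is the binomial polynomial. -/
/-
An integer-valued `P` of degree `≤ n` is an integer combination of the binomial polynomials
`C(t, k)`, `k ≤ n` (Newton's forward-difference expansion), and the linear coefficient of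
`C(t, k)` is `(-1)^(k-1)/k`. Since `P'(z)` is the linear coefficient of `P(t + z)`, `d_n P'` is
again integer-valued, of degree `≤ n`; iterating, so is every `d_n^j P^(j)`. By the Leibniz rule
the polynomials with this property form a subring, and `binom(m; n,…,n) C(t, m)` is a product of
shifted copies of `C(t, n)` and one `C(t, r)` with `r < n`.
-/

/-- The binomial polynomial `C(t, m) = t(t-1)⋯(t-m+1)/m!`. -/
noncomputable def binomPoly (m : ℕ) : Polynomial ℚ :=
  ((m.factorial : ℚ))⁻¹ • descPochhammer ℚ m

/-- The multinomial coefficient `binom(m; n, …, n)` with `⌊m/n⌋` copies of `n`,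
i.e. `m! / (n!^{⌊m/n⌋} · (m - n⌊m/n⌋)!)`. -/
def multinomRep (m n : ℕ) : ℕ :=
  m.factorial / (n.factorial ^ (m / n) * (m - n * (m / n)).factorial)

/-- `d_n = lcm(1, …, n)`. -/
def dlcm (n : ℕ) : ℕ := (Finset.Icc 1 n).lcm id

open Polynomial Finset fwdDiff
open scoped Nat

noncomputable def intValued : Subring ℚ[X] :=
  ⨅ z : ℤ, (Int.castRingHom ℚ).range.comap (evalRingHom (z : ℚ))

theorem mem_intValued {P : ℚ[X]} :
    P ∈ intValued ↔ ∀ z : ℤ, P.eval (z : ℚ) ∈ (Int.castRingHom ℚ).range := by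
  simp [intValued, Subring.mem_iInf]

theorem taylor_mem_intValued {P : ℚ[X]} (hP : P ∈ intValued) (c : ℤ) :
    taylor (c : ℚ) P ∈ intValued :=
  mem_intValued.2 fun z => by
    simpa [taylor_eval] using mem_intValued.1 hP (z + c)

theorem binomPoly_eval_intCast (k : ℕ) (z : ℤ) :
    (binomPoly k).eval (z : ℚ) = Ring.choose z k := by
  rw [binomPoly, eval_smul, ← descPochhammer_eval_cast, eval_eq_smeval,
    Ring.descPochhammer_eq_factorial_smul_choose, smul_eq_mul, nsmul_eq_mul]
  push_cast
  field_simp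

theorem binomPoly_eval_natCast (k n : ℕ) : (binomPoly k).eval (n : ℚ) = n.choose k := by
  simpa [Ring.choose_natCast] using binomPoly_eval_intCast k n

theorem binomPoly_mem_intValued (k : ℕ) : binomPoly k ∈ intValued :=
  mem_intValued.2 fun z => ⟨Ring.choose z k, (binomPoly_eval_intCast k z).symm⟩

theorem natDegree_binomPoly (k : ℕ) : (binomPoly k).natDegree = k := by
  rw [binomPoly, natDegree_smul _ (by positivity), descPochhammer_natDegree]

theorem binomPoly_coeff_one_zero : (binomPoly 0).coeff 1 = 0 := by
  simp [binomPoly, coeff_one]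

theorem binomPoly_coeff_one_succ (k : ℕ) :
    (binomPoly (k + 1)).coeff 1 = (-1) ^ k / (k + 1) := by
  have h : (descPochhammer ℚ k).eval (-1) = (-1) ^ k * k ! := by
    have := ascPochhammer_eval_neg_eq_descPochhammer (R := ℚ) (-1) k
    rw [neg_neg, ascPochhammer_eval_one] at this
    rw [this, ← mul_assoc, ← mul_pow, neg_one_mul, neg_neg, one_pow, one_mul]
  rw [binomPoly, coeff_smul, descPochhammer_succ_left, ← zero_add 1, coeff_X_mul,
    coeff_zero_eq_eval_zero, eval_comp, eval_sub, eval_X, eval_one, zero_sub, h, smul_eq_mul,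
    Nat.factorial_succ]
  push_cast
  field_simp

theorem fwdDiff_iter_eval_mem {P : ℚ[X]} (hP : P ∈ intValued) (k : ℕ) (z : ℤ) :
    Δ_[1] ^[k] P.eval (z : ℚ) ∈ (Int.castRingHom ℚ).range := by
  rw [fwdDiff_iter_eq_sum_shift]
  refine sum_mem fun i _ => zsmul_mem ?_ _
  simpa using mem_intValued.1 hP (z + i)

theorem eq_sum_fwdDiff_iter_smul_binomPoly {P : ℚ[X]} {N : ℕ} (hN : P.natDegree ≤ N) :
    P = ∑ k ∈ range (N + 1), (Δ_[1] ^[k] P.eval 0) • binomPoly k := by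
  refine eq_of_infinite_eval_eq _ _
    (Set.infinite_of_injective_forall_mem Nat.cast_injective fun n : ℕ => ?_)
  have hnewton := shift_eq_sum_fwdDiff_iter 1 P.eval n 0
  rw [zero_add, nsmul_one] at hnewton
  simp only [Set.mem_ofPred_eq, eval_finsetSum, eval_smul, binomPoly_eval_natCast, smul_eq_mul,
    hnewton, nsmul_eq_mul]
  have hsub : ∀ {a}, a ≤ n + N → range (a + 1) ⊆ range (n + N + 1) := fun h =>
    range_subset_range.2 (by omega)
  rw [sum_subset (hsub (Nat.le_add_right n N)), sum_subset (hsub (Nat.le_add_left N n))]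
  · exact sum_congr rfl fun k _ => mul_comm _ _
  · intro k _ hk
    rw [fwdDiff_iter_eq_zero_of_degree_lt (by simp at hk; omega), Pi.zero_apply, zero_mul]
  · intro k _ hk
    rw [Nat.choose_eq_zero_of_lt (by simp at hk; omega), Nat.cast_zero, zero_mul]

theorem dlcm_mul_binomPoly_coeff_one_mem {k n : ℕ} (hk : k ≤ n) :
    (dlcm n : ℚ) * (binomPoly k).coeff 1 ∈ (Int.castRingHom ℚ).range := by
  cases k with
  | zero => simp [binomPoly_coeff_one_zero]
  | succ k =>
    obtain ⟨e, he⟩ : k + 1 ∣ dlcm n := Finset.dvd_lcm (f := id) (by simp; omega)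
    refine ⟨(-1) ^ k * e, ?_⟩
    rw [eq_intCast, binomPoly_coeff_one_succ, he]
    push_cast
    field_simp

theorem dlcm_smul_derivative_mem_intValued {n : ℕ} {P : ℚ[X]} (hP : P ∈ intValued)
    (hdeg : P.natDegree ≤ n) : (dlcm n : ℚ) • derivative P ∈ intValued := by
  refine mem_intValued.2 fun z => ?_
  have hQ : taylor (z : ℚ) P ∈ intValued := taylor_mem_intValued hP z
  have hQdeg : (taylor (z : ℚ) P).natDegree ≤ n := (natDegree_taylor P z).trans_le hdeg
  rw [eval_smul, smul_eq_mul, ← taylor_coeff_one, eq_sum_fwdDiff_iter_smul_binomPoly hQdeg,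
    finsetSum_coeff, mul_sum]
  refine sum_mem fun k hk => ?_
  rw [coeff_smul, smul_eq_mul, mul_left_comm]
  exact mul_mem (by simpa using fwdDiff_iter_eval_mem hQ k 0)
    (dlcm_mul_binomPoly_coeff_one_mem (Nat.lt_succ_iff.1 (mem_range.1 hk)))

noncomputable def scaledDerivIntValued (d : ℚ) : Subring ℚ[X] where
  carrier := {P | ∀ j : ℕ, d ^ j • derivative^[j] P ∈ intValued}
  zero_mem' j := by simp
  one_mem' j := by
    rcases j.eq_zero_or_pos with rfl | hj
    · simp
    · simp [iterate_derivative_one hj]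
  add_mem' hP hQ j := by
    simpa only [iterate_map_add, smul_add] using add_mem (hP j) (hQ j)
  neg_mem' hP j := by
    simpa only [iterate_map_neg, smul_neg] using neg_mem (hP j)
  mul_mem' {P Q} hP hQ j := by
    rw [iterate_derivative_mul, smul_sum]
    refine sum_mem fun k hk => ?_
    have hkj : k ≤ j := Nat.lt_succ_iff.1 (mem_range.1 hk)
    rw [smul_comm, ← Nat.sub_add_cancel hkj, pow_add, Nat.sub_add_cancel hkj,
      ← smul_mul_smul_comm]
    exact nsmul_mem (mul_mem (hP _) (hQ k)) _

theorem mem_scaledDerivIntValued_dlcm {n : ℕ} {P : ℚ[X]} (hP : P ∈ intValued)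
    (hdeg : P.natDegree ≤ n) : P ∈ scaledDerivIntValued (dlcm n) := by
  intro j
  induction j generalizing P with
  | zero => simpa using hP
  | succ j ih =>
    have hdeg' : ((dlcm n : ℚ) • derivative P).natDegree ≤ n :=
      (natDegree_smul_le _ _).trans ((natDegree_derivative_le P).trans (by omega))
    rw [Function.iterate_succ_apply, pow_succ, mul_smul, ← iterate_derivative_smul]
    exact ih (dlcm_smul_derivative_mem_intValued hP hdeg) hdeg'

theorem binomPoly_mul_taylor_binomPoly (a b : ℕ) :
    binomPoly a * taylor (-(a : ℚ)) (binomPoly b) =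
      ((a + b).choose a : ℚ) • binomPoly (a + b) := by
  have h : taylor (-(a : ℚ)) (descPochhammer ℚ b) =
      (descPochhammer ℚ b).comp (X - (a : ℚ[X])) := by
    rw [taylor_apply, map_neg, ← sub_eq_add_neg, C_eq_natCast]
  simp only [binomPoly, map_smul, h, smul_mul_smul_comm, descPochhammer_mul, smul_smul,
    Nat.cast_add_choose]
  congr 1
  field_simp

theorem prod_taylor_binomPoly (n q r : ℕ) :
    (∏ i ∈ range q, taylor (-(n * i : ℚ)) (binomPoly n)) *
        taylor (-(n * q : ℚ)) (binomPoly r) =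
      (((n * q + r)! : ℚ) / (n ! ^ q * r !)) • binomPoly (n * q + r) := by
  induction q with
  | zero => simp [Nat.factorial_ne_zero]
  | succ q ih =>
    calc (∏ i ∈ range (q + 1), taylor (-(n * i : ℚ)) (binomPoly n)) *
          taylor (-(n * (q + 1 : ℕ) : ℚ)) (binomPoly r)
        = binomPoly n * taylor (-(n : ℚ))
            ((∏ i ∈ range q, taylor (-(n * i : ℚ)) (binomPoly n)) *
              taylor (-(n * q : ℚ)) (binomPoly r)) := by
          have hprod := map_prod (taylorAlgHom (-(n : ℚ)))
            (fun i : ℕ => taylor (-(n * i : ℚ)) (binomPoly n)) (range q)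
          simp only [taylorAlgHom_apply] at hprod
          rw [prod_range_succ', Nat.cast_zero, mul_zero, neg_zero, taylor_zero, taylor_mul,
            hprod]
          simp only [taylor_taylor]
          push_cast
          ring_nf
      _ = (((n * q + r)! : ℚ) / (n ! ^ q * r !)) •
            (binomPoly n * taylor (-(n : ℚ)) (binomPoly (n * q + r))) := by
          rw [ih, map_smul, mul_smul_comm]
      _ = _ := by
          rw [binomPoly_mul_taylor_binomPoly, smul_smul,
            show n * (q + 1) + r = n + (n * q + r) by ring, Nat.cast_add_choose]
          congr 1
          field_simp
          ring

theorem factorial_pow_mul_factorial_dvd (n q r : ℕ) : n ! ^ q * r ! ∣ (n * q + r)! :=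
  calc n ! ^ q * r ! ∣ (n * q)! * r ! :=
        mul_dvd_mul_right (by
          simpa [mul_comm] using Nat.prod_factorial_dvd_factorial_sum (range q) fun _ => n) _
    _ ∣ (n * q + r)! := Nat.factorial_mul_factorial_dvd_factorial_add _ _

theorem cast_multinomRep (m n : ℕ) :
    (multinomRep m n : ℚ) = (m ! : ℚ) / (n ! ^ (m / n) * (m - n * (m / n))!) := by
  have hm : n * (m / n) + (m - n * (m / n)) = m := Nat.add_sub_cancel' (Nat.mul_div_le m n)
  have hdvd := factorial_pow_mul_factorial_dvd n (m / n) (m - n * (m / n))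
  rw [hm] at hdvd
  rw [multinomRep, Nat.cast_div hdvd (by positivity)]
  push_cast
  rfl

theorem taylor_binomPoly_mem_scaledDerivIntValued {k n : ℕ} (hk : k ≤ n) (c : ℤ) :
    taylor (c : ℚ) (binomPoly k) ∈ scaledDerivIntValued (dlcm n) :=
  mem_scaledDerivIntValued_dlcm (taylor_mem_intValued (binomPoly_mem_intValued k) c)
    ((natDegree_taylor _ _).trans_le ((natDegree_binomPoly k).trans_le hk))

theorem factorial_div_smul_binomPoly_mem_scaledDerivIntValued (q : ℕ) {n r : ℕ} (hr : r ≤ n) :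
    (((n * q + r)! : ℚ) / (n ! ^ q * r !)) • binomPoly (n * q + r) ∈
      scaledDerivIntValued (dlcm n) := by
  rw [← prod_taylor_binomPoly]
  refine mul_mem (prod_mem fun i _ => ?_) ?_
  · exact_mod_cast taylor_binomPoly_mem_scaledDerivIntValued le_rfl (-(n * i : ℤ))
  · exact_mod_cast taylor_binomPoly_mem_scaledDerivIntValued hr (-(n * q : ℤ))

/-- For `λ ≤ n`, the polynomial `d_n^λ · (d/dt)^λ [ binom(m; n,…,n) · C(t,m) ]`
is integer-valued. -/
theorem multinom_binomPoly_deriv_integerValued (lam n m : ℕ) (hlam : lam ≤ n) :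
    ∀ z : ℤ, ∃ a : ℤ,
      (((dlcm n : ℚ) ^ lam) •
        ((Polynomial.derivative ^ lam : Polynomial ℚ →ₗ[ℚ] Polynomial ℚ)
          ((multinomRep m n : ℚ) • binomPoly m))).eval (z : ℚ) = (a : ℚ) := by
  intro z
  rw [Module.End.pow_apply]
  rcases n.eq_zero_or_pos with rfl | hn
  · obtain rfl : lam = 0 := Nat.le_zero.1 hlam
    have hmem : (multinomRep m 0 : ℚ) • binomPoly m ∈ intValued := by
      rw [Nat.cast_smul_eq_nsmul]
      exact nsmul_mem (binomPoly_mem_intValued m) _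
    obtain ⟨a, ha⟩ := mem_intValued.1 hmem z
    exact ⟨a, by simpa using ha.symm⟩
  · have hm : n * (m / n) + (m - n * (m / n)) = m := Nat.add_sub_cancel' (Nat.mul_div_le m n)
    have hr : m - n * (m / n) ≤ n := by
      rw [← Nat.mod_eq_sub_mul_div]
      exact (Nat.mod_lt m hn).le
    have hmem := factorial_div_smul_binomPoly_mem_scaledDerivIntValued (m / n) hr
    rw [hm, ← cast_multinomRep] at hmem
    obtain ⟨a, ha⟩ := mem_intValued.1 (hmem lam) z
    exact ⟨a, ha.symm⟩
end

section
/- Let p be prime, l ≥ 0 and m ≥ 1 integers, d' a positive integer prime to p, and set D = d'·p^l, N = p^l(p^m − 1), where m = ⌊log_p(n·d')⌋ + 1 for a positive integer n. For every nonnegative integer j and every x ∈ Z_{≥0}: C(N + D·x + j, N) ≡ 1 mod p if x ≡ −(d')^{−1}·⌊j/p^l⌋ mod p^m, and C(N + D·x + j, N) ≡ 0 mod p otherwise. (Here (d')^{−1} is the inverse of d' modulo p^m.) -/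
/-!
Lucas' theorem in base `p ^ k`: `C(p^k a + b, p^k c + d) ≡ C(a, c) C(b, d) (mod p)` for
`b, d < p^k`. With `K = d' x + ⌊j / p^l⌋` one has `N + D x + j = p^l (K + p^m - 1) + (j mod p^l)`
and `N = p^l (p^m - 1)`, so in base `p^l` the coefficient reduces to `C(K + p^m - 1, p^m - 1)`.
In base `p^m` this is `C(r, p^m - 1)` with `r` the remainder of `K + p^m - 1`, which is `1` when
`p^m ∣ K` (then `r = p^m - 1`) and `0` otherwise (then `r < p^m - 1`).
-/

section
variable {p : ℕ} [Fact p.Prime]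

theorem choose_pow_mul_add_modEq (k : ℕ) {a b c d : ℕ} (hb : b < p ^ k) (hd : d < p ^ k) :
    (p ^ k * a + b).choose (p ^ k * c + d) ≡ a.choose c * b.choose d [MOD p] := by
  induction k generalizing b d with
  | zero =>
    obtain rfl : b = 0 := by simpa using hb
    obtain rfl : d = 0 := by simpa using hd
    simp [Nat.ModEq.refl]
  | succ k ih =>
    have hp : 0 < p := (Fact.out : p.Prime).pos
    have digits (e f : ℕ) :
        (p ^ (k + 1) * e + f) % p = f % p ∧ (p ^ (k + 1) * e + f) / p = p ^ k * e + f / p := by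
      rw [pow_succ', mul_assoc]
      exact ⟨Nat.mul_add_mod .., Nat.mul_add_div hp ..⟩
    rw [pow_succ'] at hb hd
    calc (p ^ (k + 1) * a + b).choose (p ^ (k + 1) * c + d)
        ≡ (b % p).choose (d % p) * (p ^ k * a + b / p).choose (p ^ k * c + d / p) [MOD p] := by
          simpa only [digits] using Choose.choose_modEq_choose_mod_mul_choose_div_nat (p := p)
            (n := p ^ (k + 1) * a + b) (k := p ^ (k + 1) * c + d)
      _ ≡ (b % p).choose (d % p) * (a.choose c * (b / p).choose (d / p)) [MOD p] :=
          (ih (Nat.div_lt_of_lt_mul hb) (Nat.div_lt_of_lt_mul hd)).mul_left _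
      _ = a.choose c * ((b % p).choose (d % p) * (b / p).choose (d / p)) := by ring
      _ ≡ a.choose c * b.choose d [MOD p] :=
          (Choose.choose_modEq_choose_mod_mul_choose_div_nat (p := p)).symm.mul_left _

theorem choose_pow_mul_add_pow_mul_modEq (k : ℕ) {a b c : ℕ} (hb : b < p ^ k) :
    (p ^ k * a + b).choose (p ^ k * c) ≡ a.choose c [MOD p] := by
  simpa using choose_pow_mul_add_modEq k (c := c) hb (Nat.pow_pos (Fact.out : p.Prime).pos)

theorem choose_add_pow_sub_one_modEq (m K : ℕ) :
    (K + (p ^ m - 1)).choose (p ^ m - 1) ≡ if p ^ m ∣ K then 1 else 0 [MOD p] := by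
  have hq : 0 < p ^ m := Nat.pow_pos (n := m) (Fact.out : p.Prime).pos
  have lucas (a b : ℕ) (hb : b < p ^ m) :
      (p ^ m * a + b).choose (p ^ m - 1) ≡ b.choose (p ^ m - 1) [MOD p] := by
    simpa using choose_pow_mul_add_modEq m (c := 0) (a := a) hb (Nat.sub_lt hq one_pos)
  obtain ⟨t, s, hs, rfl⟩ : ∃ t s, s < p ^ m ∧ K = p ^ m * t + s :=
    ⟨K / p ^ m, K % p ^ m, Nat.mod_lt _ hq, (Nat.div_add_mod K _).symm⟩
  rcases Nat.eq_zero_or_pos s with rfl | hs0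
  · simpa [add_assoc] using lucas t (p ^ m - 1) (Nat.sub_lt hq one_pos)
  · have hndvd : ¬ p ^ m ∣ p ^ m * t + s :=
      fun h => (Nat.not_dvd_of_pos_of_lt hs0 hs) ((Nat.dvd_add_right (dvd_mul_right _ _)).mp h)
    have hsplit : p ^ m * t + s + (p ^ m - 1) = p ^ m * (t + 1) + (s - 1) := by
      rw [mul_add]; omega
    rw [if_neg hndvd, hsplit, ← Nat.choose_eq_zero_of_lt (by omega : s - 1 < p ^ m - 1)]
    exact lucas _ _ (by omega)

end

theorem choose_shift_mod_p_general (p : ℕ) (hp : p.Prime) (l d' : ℕ)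
    (m N D : ℕ)
    (hN : N = p ^ l * (p ^ m - 1))
    (hD : D = d' * p ^ l)
    (j x : ℕ) :
    (p ^ m ∣ d' * x + j / p ^ l → (N + D * x + j).choose N ≡ 1 [MOD p]) ∧
    (¬ p ^ m ∣ d' * x + j / p ^ l → (N + D * x + j).choose N ≡ 0 [MOD p]) := by
  have := Fact.mk hp
  have hsplit : N + D * x + j = p ^ l * (d' * x + j / p ^ l + (p ^ m - 1)) + j % p ^ l := by
    conv_lhs => rw [← Nat.div_add_mod j (p ^ l)]
    rw [hN, hD]
    ring
  have key := (choose_pow_mul_add_pow_mul_modEq l (Nat.mod_lt j (Nat.pow_pos hp.pos))).trans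
    (choose_add_pow_sub_one_modEq m (d' * x + j / p ^ l))
  rw [← hsplit, ← hN] at key
  exact ⟨fun h => by rwa [if_pos h] at key, fun h => by rwa [if_neg h] at key⟩

/-- Let `p` be prime, `l ≥ 0`, `n ≥ 1`, `d'` positive and prime to `p`, and set
`m = ⌊log_p(n·d')⌋ + 1`, `D = d'·p^l`, `N = p^l(p^m - 1)`. Then for all
nonnegative integers `j` and `x`:
`C(N + D·x + j, N) ≡ 1 mod p` if `x ≡ -(d')⁻¹·⌊j/p^l⌋ mod p^m`
(equivalently `p^m ∣ d'·x + ⌊j/p^l⌋`), and `C(N + D·x + j, N) ≡ 0 mod p`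
otherwise. -/
theorem choose_shift_mod_p (p : ℕ) (hp : p.Prime) (l n d' : ℕ)
    (hn : 0 < n) (hd' : 0 < d') (hcop : Nat.Coprime d' p)
    (m N D : ℕ)
    (hm : m = Nat.log p (n * d') + 1)
    (hN : N = p ^ l * (p ^ m - 1))
    (hD : D = d' * p ^ l)
    (j x : ℕ) :
    (p ^ m ∣ d' * x + j / p ^ l → (N + D * x + j).choose N ≡ 1 [MOD p]) ∧
    (¬ p ^ m ∣ d' * x + j / p ^ l → (N + D * x + j).choose N ≡ 0 [MOD p]) :=
  choose_shift_mod_p_general p hp l d' m N D hN hD j x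
end

section
/- Let 0 ≤ s ≤ r−1, M ∈ M_{(s+1)×(r+1)}(C_p), L a 1×(r+1) row over C_p, ξ ∈ C_p^{r+1}. With H_p(M) = max_J |det M_J|_p over (s+1)-subsets J of columns and Δ_p as above (Δ_p(L) = |L·ξ|_p for a single row), if H_p(M)·Δ_p(L) > H_p(L)·Δ_p(M), then Δ_p(M⊕L) = H_p(M)·Δ_p(L). -/
/-!
Expand the `(s+2)`-minor `(M ⊕ L)_{J,ξ}` along its last row. The entry `L·ξ` multiplies
`det M_J`, and each other entry `L_j`, `j ∈ J`, multiplies a minor `M_{J∖j,ξ}`. Hence every such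
determinant is `(L·ξ) det M_J` plus a perturbation of norm at most `H_p(L) Δ_p(M)`, which by
hypothesis is smaller than `max_J |L·ξ| |det M_J| = H_p(M) Δ_p(L)`. In an ultrametric field a
perturbation uniformly below the maximum changes neither the maximum nor its value at a maximizer.
-/

/-- `H_p(A) = max_J |det A_J|_p` over sets `J` of `m` columns. -/
noncomputable def heightP {𝕃 : Type*} [NormedField 𝕃] {m n : ℕ}
    (A : Matrix (Fin m) (Fin n) 𝕃) : NNReal :=
  Finset.univ.sup fun e : Fin m ↪ Fin n => ‖(A.submatrix id e).det‖₊

/-- `Δ_p(A) = max_{J'} |det A_{J',ξ}|_p` over sets `J'` of `m` columns of the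
`(m+1)`-row matrix `A`, where `A_{J',ξ}` is formed by the columns `J'` of `A`
together with the column `A·ξ`. For a single row `L` this is `|L·ξ|_p`. -/
noncomputable def deltaP {𝕃 : Type*} [NormedField 𝕃] {m n : ℕ}
    (ξ : Fin n → 𝕃) (A : Matrix (Fin (m + 1)) (Fin n) 𝕃) : NNReal :=
  Finset.univ.sup fun e : Fin m ↪ Fin n =>
    ‖(Matrix.of fun i (j : Fin (m + 1)) =>
        Fin.snoc (fun j' : Fin m => A i (e j')) (A.mulVec ξ i) j).det‖₊

open scoped Matrix

theorem Finset.sup_nnnorm_add_eq_of_le_of_lt {ι E : Type*} [SeminormedAddCommGroup E]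
    [IsUltrametricDist E] {s : Finset ι} {a b : ι → E} {c : NNReal}
    (hb : ∀ i ∈ s, ‖b i‖₊ ≤ c) (hc : c < s.sup fun i => ‖a i‖₊) :
    (s.sup fun i => ‖a i + b i‖₊) = s.sup fun i => ‖a i‖₊ := by
  refine le_antisymm (Finset.sup_le fun i hi => ?_) ?_
  · exact (IsUltrametricDist.nnnorm_add_le_max _ _).trans
      (max_le (Finset.le_sup (f := fun i => ‖a i‖₊) hi) ((hb i hi).trans hc.le))
  · have hs : s.Nonempty := Finset.nonempty_iff_ne_empty.2 fun h => by simp [h] at hc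
    obtain ⟨i, hi, hmax⟩ := Finset.exists_mem_eq_sup s hs fun i => ‖a i‖₊
    have hlt : ‖b i‖₊ < ‖a i‖₊ := (hb i hi).trans_lt (hmax ▸ hc)
    calc (s.sup fun i => ‖a i‖₊) = ‖a i + b i‖₊ := by
          rw [hmax, IsUltrametricDist.nnnorm_add_eq_max_of_nnnorm_ne_nnnorm hlt.ne',
            max_eq_left hlt.le]
      _ ≤ _ := Finset.le_sup (f := fun i => ‖a i + b i‖₊) hi

/-- The matrix `A_{J',ξ}` of `deltaP`, for `J' = range e`. -/
def deltaMinor {R : Type*} [CommRing R] {m n : ℕ} (ξ : Fin n → R)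
    (A : Matrix (Fin (m + 1)) (Fin n) R) (e : Fin m ↪ Fin n) :
    Matrix (Fin (m + 1)) (Fin (m + 1)) R :=
  Matrix.of fun i (j : Fin (m + 1)) =>
    Fin.snoc (α := fun _ => R) (fun j' : Fin m => A i (e j')) ((A *ᵥ ξ) i) j

section lastRow
variable {R : Type*} [CommRing R] {m n : ℕ} (ξ : Fin n → R)
  (A : Matrix (Fin (m + 2)) (Fin n) R) (e : Fin (m + 1) ↪ Fin n)

theorem deltaMinor_last_castSucc (j : Fin (m + 1)) :
    deltaMinor ξ A e (Fin.last _) j.castSucc = A (Fin.last _) (e j) := by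
  simp [deltaMinor]

theorem deltaMinor_last_last :
    deltaMinor ξ A e (Fin.last _) (Fin.last _) = (A *ᵥ ξ) (Fin.last _) := by
  simp [deltaMinor]

theorem deltaMinor_submatrix_castSucc_castSucc :
    (deltaMinor ξ A e).submatrix Fin.castSucc Fin.castSucc =
      (A.submatrix Fin.castSucc id).submatrix id e := by
  ext i k
  simp [deltaMinor]

theorem deltaMinor_submatrix_castSucc_succAbove (j : Fin (m + 1)) :
    (deltaMinor ξ A e).submatrix Fin.castSucc j.castSucc.succAbove =
      deltaMinor ξ (A.submatrix Fin.castSucc id) ((Fin.succAboveEmb j).trans e) := by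
  ext i k
  induction k using Fin.lastCases with
  | last =>
    simp only [deltaMinor, Matrix.submatrix_apply, Matrix.of_apply,
      Fin.succAbove_ne_last_last (Fin.castSucc_lt_last j).ne, Fin.snoc_last]
    rfl
  | cast k => simp [deltaMinor, Fin.castSucc_succAbove_castSucc]

theorem det_deltaMinor_eq_add_sum :
    (deltaMinor ξ A e).det =
      (A *ᵥ ξ) (Fin.last _) * ((A.submatrix Fin.castSucc id).submatrix id e).det +
        ∑ j : Fin (m + 1), (-1) ^ (m + 1 + j : ℕ) * A (Fin.last _) (e j) *
          (deltaMinor ξ (A.submatrix Fin.castSucc id) ((Fin.succAboveEmb j).trans e)).det := by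
  rw [Matrix.det_succ_row _ (Fin.last _), Fin.sum_univ_castSucc, add_comm]
  simp only [Fin.succAbove_last, deltaMinor_last_last, deltaMinor_last_castSucc,
    deltaMinor_submatrix_castSucc_castSucc, deltaMinor_submatrix_castSucc_succAbove, Fin.val_last,
    Fin.val_castSucc, ← two_mul, pow_mul, neg_one_sq, one_pow, one_mul]

end lastRow

section snoc
variable {R : Type*} {m n : ℕ} (M : Matrix (Fin m) (Fin n) R) (L : Fin n → R)

@[simp]
theorem of_snoc_last : Matrix.of (Fin.snoc M L) (Fin.last _) = L :=
  Fin.snoc_last (α := fun _ => Fin n → R) _ _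

@[simp]
theorem of_snoc_submatrix_castSucc :
    (Matrix.of (Fin.snoc M L)).submatrix Fin.castSucc id = M := by
  ext i j
  exact congrFun (Fin.snoc_castSucc (α := fun _ => Fin n → R) _ _ _) j

theorem of_snoc_mulVec_last [NonUnitalNonAssocSemiring R] (ξ : Fin n → R) :
    (Matrix.of (Fin.snoc M L) *ᵥ ξ) (Fin.last _) = L ⬝ᵥ ξ := by
  rw [Matrix.mulVec, of_snoc_last]

end snoc

section norms
variable {𝕃 : Type*} [NormedField 𝕃] {m n : ℕ}

theorem nnnorm_det_submatrix_le_heightP (A : Matrix (Fin m) (Fin n) 𝕃) (e : Fin m ↪ Fin n) :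
    ‖(A.submatrix id e).det‖₊ ≤ heightP A :=
  Finset.le_sup (f := fun e : Fin m ↪ Fin n => ‖(A.submatrix id e).det‖₊) (Finset.mem_univ e)

theorem nnnorm_det_deltaMinor_le_deltaP (ξ : Fin n → 𝕃) (A : Matrix (Fin (m + 1)) (Fin n) 𝕃)
    (e : Fin m ↪ Fin n) : ‖(deltaMinor ξ A e).det‖₊ ≤ deltaP ξ A :=
  Finset.le_sup (f := fun e : Fin m ↪ Fin n => ‖(deltaMinor ξ A e).det‖₊) (Finset.mem_univ e)

theorem nnnorm_le_heightP_row (L : Fin n → 𝕃) (j : Fin n) :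
    ‖L j‖₊ ≤ heightP (Matrix.of ![L]) := by
  simpa [Matrix.det_fin_one] using nnnorm_det_submatrix_le_heightP (Matrix.of ![L])
    ⟨fun _ => j, Function.injective_of_subsingleton _⟩

theorem deltaP_row (ξ L : Fin n → 𝕃) : deltaP ξ (Matrix.of ![L]) = ‖L ⬝ᵥ ξ‖₊ := by
  have hminor : ∀ e, ‖(deltaMinor ξ (Matrix.of ![L]) e).det‖₊ = ‖L ⬝ᵥ ξ‖₊ := fun e => by
    rw [Matrix.det_fin_one]; rfl
  simp only [deltaP]
  exact (Finset.sup_congr rfl fun e _ => hminor e).trans (Finset.sup_const Finset.univ_nonempty _)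

theorem nnnorm_det_deltaMinor_snoc_sub_le [IsUltrametricDist 𝕃] (ξ : Fin n → 𝕃)
    (M : Matrix (Fin (m + 1)) (Fin n) 𝕃) (L : Fin n → 𝕃) (e : Fin (m + 1) ↪ Fin n) :
    ‖(deltaMinor ξ (Matrix.of (Fin.snoc M L)) e).det - L ⬝ᵥ ξ * (M.submatrix id e).det‖₊ ≤
      heightP (Matrix.of ![L]) * deltaP ξ M := by
  rw [det_deltaMinor_eq_add_sum, of_snoc_mulVec_last, of_snoc_last, of_snoc_submatrix_castSucc,
    add_sub_cancel_left]
  refine IsUltrametricDist.nnnorm_sum_le_of_forall_le fun j _ => ?_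
  rw [nnnorm_mul, nnnorm_mul, nnnorm_pow, nnnorm_neg, nnnorm_one, one_pow, one_mul]
  exact mul_le_mul' (nnnorm_le_heightP_row L _) (nnnorm_det_deltaMinor_le_deltaP ξ M _)

end norms

theorem deltaP_append_row_general (𝕃 : Type*) [NormedField 𝕃] [IsUltrametricDist 𝕃]
    (s r : ℕ)
    (M : Matrix (Fin (s + 1)) (Fin (r + 1)) 𝕃) (L : Fin (r + 1) → 𝕃)
    (ξ : Fin (r + 1) → 𝕃)
    (h : heightP (Matrix.of ![L]) * deltaP ξ M <
      heightP M * deltaP ξ (Matrix.of ![L])) :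
    deltaP ξ (Matrix.of (Fin.snoc M L)) = heightP M * deltaP ξ (Matrix.of ![L]) := by
  have hsup : (Finset.univ.sup fun e : Fin (s + 1) ↪ Fin (r + 1) =>
      ‖L ⬝ᵥ ξ * (M.submatrix id e).det‖₊) = heightP M * deltaP ξ (Matrix.of ![L]) := by
    simp only [nnnorm_mul, ← NNReal.mul_finset_sup, deltaP_row, heightP, mul_comm]
  rw [← hsup] at h ⊢
  calc deltaP ξ (Matrix.of (Fin.snoc M L))
      = Finset.univ.sup fun e : Fin (s + 1) ↪ Fin (r + 1) =>
          ‖L ⬝ᵥ ξ * (M.submatrix id e).det + ((deltaMinor ξ (Matrix.of (Fin.snoc M L)) e).det -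
              L ⬝ᵥ ξ * (M.submatrix id e).det)‖₊ := by
        simp only [add_sub_cancel]; rfl
    _ = _ := Finset.sup_nnnorm_add_eq_of_le_of_lt
        (fun e _ => nnnorm_det_deltaMinor_snoc_sub_le ξ M L e) h

/-- For `0 ≤ s ≤ r-1`, a matrix `M ∈ M_{(s+1)×(r+1)}(ℂ_p)` (here over an
ultrametric normed field `𝕃`), a row `L` and `ξ ∈ 𝕃^{r+1}`:
if `H_p(M)·Δ_p(L) > H_p(L)·Δ_p(M)`, then `Δ_p(M ⊕ L) = H_p(M)·Δ_p(L)`. -/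
theorem deltaP_append_row (𝕃 : Type*) [NormedField 𝕃] [IsUltrametricDist 𝕃]
    (s r : ℕ) (hsr : s + 1 ≤ r)
    (M : Matrix (Fin (s + 1)) (Fin (r + 1)) 𝕃) (L : Fin (r + 1) → 𝕃)
    (ξ : Fin (r + 1) → 𝕃)
    (h : heightP (Matrix.of ![L]) * deltaP ξ M <
      heightP M * deltaP ξ (Matrix.of ![L])) :
    deltaP ξ (Matrix.of (Fin.snoc M L)) = heightP M * deltaP ξ (Matrix.of ![L]) :=
  deltaP_append_row_general 𝕃 s r M L ξ h
end
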